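/- arXiv:2103.16036 — 5 statements merged into one kernel-verified Lean document; each statement's English description precedes it below -/
import Mathlib

section
/- Tensor power method convergence: let T = ∑_{i=1}^L λ_i v_i^{⊗3} with {v_i} orthonormal and λ_i > 0, and suppose θ₀ ∈ ℝ^d is such that |λ₁ v₁ᵀθ₀| is strictly the largest among {|λ_i v_iᵀθ₀| : 1 ≤ i ≤ L} (in particular v₁ᵀθ₀ ≠ 0). Define the iteration θ_t = T(I,θ_{t−1},θ_{t−1}) / ‖T(I,θ_{t−1},θ_{t−1})‖. Then for all t ≥ 1, ‖v₁ − θ_t‖² ≤ (2λ₁² ∑_{i=2}^L λ_i^{−2}) · |λ₂ v₂ᵀθ₀ / (λ₁ v₁ᵀθ₀)|^{2^{t+1}}, where the indexing is such that index 2 attains the second largest value of |λ_i v_iᵀθ₀|. -/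
open Finset RealInnerProductSpace WithLp

/-!
Write `c_l θ = ⟪v_l, θ⟫` and `F θ = T(I, θ, θ) = ∑ λ_l (c_l θ)² v_l`. By orthonormality
`λ_l c_l (F θ) = (λ_l c_l θ)²`, hence `λ_l c_l (F^[t] θ₀) = (λ_l c_l θ₀)^(2^t)`. Since `F` is
homogeneous of degree 2, normalising at every step or only at the end gives the same vector, so
`θ_t = F^[t] θ₀ / ‖F^[t] θ₀‖`; as `λ₁ > 0` and `2^t` is even, `⟪v₁, θ_t⟫ > 0`. For unit vectors
with `⟪v₁, θ⟫ ≥ 0` we have `‖v₁ - θ‖² ≤ 2 (1 - ⟪v₁, θ⟫²)`, and for `θ = σ / ‖σ‖` with `σ` in the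
span of the `v_l` this equals `2 ∑_{l ≠ 1} c_l² / ∑_l c_l² ≤ 2 ∑_{l ≠ 1} c_l² / c_1²`; the closed
form of the coefficients turns each ratio `c_l² / c_1²` into
`λ₁² λ_l⁻² (λ_l c_l θ₀ / λ₁ c_1 θ₀)^(2^(t+1))`.
-/

section Abstract

variable {ι E : Type*} [Fintype ι] [NormedAddCommGroup E] [InnerProductSpace ℝ E]

/-- `θ ↦ T(I, θ, θ)` for the orthogonally decomposable tensor `T = ∑ l, lam l • v l ⊗ v l ⊗ v l`. -/
noncomputable def tensorPowerMap (v : ι → E) (lam : ι → ℝ) (θ : E) : E :=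
  ∑ l, (lam l * ⟪v l, θ⟫ ^ 2) • v l

variable {v : ι → E} {lam : ι → ℝ}

theorem inner_tensorPowerMap (hv : Orthonormal ℝ v) (θ : E) (l : ι) :
    ⟪v l, tensorPowerMap v lam θ⟫ = lam l * ⟪v l, θ⟫ ^ 2 :=
  hv.inner_right_fintype _ l

theorem norm_tensorPowerMap_sq (hv : Orthonormal ℝ v) (θ : E) :
    ‖tensorPowerMap v lam θ‖ ^ 2 = ∑ l, ⟪v l, tensorPowerMap v lam θ⟫ ^ 2 := by
  simp_rw [← real_inner_self_eq_norm_sq, inner_tensorPowerMap hv]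
  rw [tensorPowerMap, hv.inner_sum]
  simp [sq]

theorem tensorPowerMap_smul (r : ℝ) (θ : E) :
    tensorPowerMap v lam (r • θ) = r ^ 2 • tensorPowerMap v lam θ := by
  simp only [tensorPowerMap, real_inner_smul_right, smul_sum, smul_smul]
  congr! 2
  ring

theorem normalize_tensorPowerMap_normalize (θ : E) :
    NormedSpace.normalize (tensorPowerMap v lam (NormedSpace.normalize θ)) =
      NormedSpace.normalize (tensorPowerMap v lam θ) := by
  rcases eq_or_ne θ 0 with rfl | hθ
  · rw [NormedSpace.normalize_zero_eq_zero]
  · rw [show NormedSpace.normalize θ = ‖θ‖⁻¹ • θ from rfl, tensorPowerMap_smul,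
      NormedSpace.normalize_smul_of_pos (by positivity)]

theorem mul_inner_iterate_tensorPowerMap (hv : Orthonormal ℝ v) (θ : E) (l : ι) (t : ℕ) :
    lam l * ⟪v l, (tensorPowerMap v lam)^[t] θ⟫ = (lam l * ⟪v l, θ⟫) ^ 2 ^ t := by
  induction t with
  | zero => simp
  | succ t ih =>
    rw [Function.iterate_succ_apply', inner_tensorPowerMap hv, pow_succ 2 t, pow_mul, ← ih]
    ring

theorem sq_inner_iterate_tensorPowerMap (hv : Orthonormal ℝ v) (θ : E) {l : ι} (hl : lam l ≠ 0)
    (t : ℕ) :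
    ⟪v l, (tensorPowerMap v lam)^[t] θ⟫ ^ 2 = (lam l * ⟪v l, θ⟫) ^ 2 ^ (t + 1) / lam l ^ 2 := by
  rw [eq_div_iff (pow_ne_zero 2 hl), pow_succ 2 t, pow_mul, ← mul_inner_iterate_tensorPowerMap hv]
  ring

theorem eq_normalize_iterate_succ {f : E → E}
    (hf : ∀ x, NormedSpace.normalize (f (NormedSpace.normalize x)) = NormedSpace.normalize (f x))
    {θ : ℕ → E}
    (hθ : ∀ t, θ (t + 1) = NormedSpace.normalize (f (θ t))) (t : ℕ) :
    θ (t + 1) = NormedSpace.normalize (f^[t + 1] (θ 0)) := by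
  induction t with
  | zero => exact hθ 0
  | succ t ih => rw [hθ, ih, hf, Function.iterate_succ_apply' f (t + 1)]

theorem norm_sub_sq_le_of_inner_nonneg {u w : E} (hu : ‖u‖ = 1) (hw : ‖w‖ = 1)
    (huw : 0 ≤ ⟪u, w⟫) : ‖u - w‖ ^ 2 ≤ 2 * (1 - ⟪u, w⟫ ^ 2) := by
  have huw' : ⟪u, w⟫ ≤ 1 := by simpa [hu, hw] using real_inner_le_norm u w
  rw [norm_sub_sq_real, hu, hw]
  nlinarith

theorem norm_sub_normalize_sq_le [DecidableEq ι] {i : ι} (hvi : ‖v i‖ = 1) {σ : E}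
    (hσ : ‖σ‖ ^ 2 = ∑ l, ⟪v l, σ⟫ ^ 2) (hi : 0 < ⟪v i, σ⟫) :
    ‖v i - NormedSpace.normalize σ‖ ^ 2 ≤ 2 * ∑ l ∈ univ.erase i, ⟪v l, σ⟫ ^ 2 / ⟪v i, σ⟫ ^ 2 := by
  have hσ0 : σ ≠ 0 := by rintro rfl; simp at hi
  have hnorm : 0 < ‖σ‖ := norm_pos_iff.mpr hσ0
  have hinner : ⟪v i, NormedSpace.normalize σ⟫ = ⟪v i, σ⟫ / ‖σ‖ := by
    rw [NormedSpace.normalize, real_inner_smul_right, inv_mul_eq_div]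
  have hsplit : ‖σ‖ ^ 2 = ∑ l ∈ univ.erase i, ⟪v l, σ⟫ ^ 2 + ⟪v i, σ⟫ ^ 2 := by
    rw [hσ, sum_erase_add _ _ (mem_univ i)]
  calc ‖v i - NormedSpace.normalize σ‖ ^ 2
      ≤ 2 * (1 - ⟪v i, NormedSpace.normalize σ⟫ ^ 2) :=
        norm_sub_sq_le_of_inner_nonneg hvi (NormedSpace.norm_normalize hσ0)
          (hinner ▸ by positivity)
    _ = 2 * ((∑ l ∈ univ.erase i, ⟪v l, σ⟫ ^ 2) / ‖σ‖ ^ 2) := by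
        rw [hinner, div_pow]
        field_simp
        linarith
    _ ≤ 2 * ((∑ l ∈ univ.erase i, ⟪v l, σ⟫ ^ 2) / ⟪v i, σ⟫ ^ 2) := by
        gcongr 2 * (_ / ?_)
        exact hsplit ▸ le_add_of_nonneg_left (sum_nonneg fun l _ => sq_nonneg _)
    _ = 2 * ∑ l ∈ univ.erase i, ⟪v l, σ⟫ ^ 2 / ⟪v i, σ⟫ ^ 2 := by rw [sum_div]

theorem norm_sub_normalize_iterate_tensorPowerMap_sq_le [DecidableEq ι] (hv : Orthonormal ℝ v)
    (hlam : ∀ l, 0 < lam l) {θ : E} {i j : ι} (hi : lam i * ⟪v i, θ⟫ ≠ 0)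
    (hj : ∀ l ≠ i, |lam l * ⟪v l, θ⟫| ≤ |lam j * ⟪v j, θ⟫|) (t : ℕ) :
    ‖v i - NormedSpace.normalize ((tensorPowerMap v lam)^[t + 1] θ)‖ ^ 2 ≤
      (2 * lam i ^ 2 * ∑ l ∈ univ.erase i, (lam l ^ 2)⁻¹) *
        |lam j * ⟪v j, θ⟫ / (lam i * ⟪v i, θ⟫)| ^ 2 ^ (t + 2) := by
  set σ := (tensorPowerMap v lam)^[t + 1] θ
  have hσ : ‖σ‖ ^ 2 = ∑ l, ⟪v l, σ⟫ ^ 2 := by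
    simp only [σ, Function.iterate_succ_apply']
    exact norm_tensorPowerMap_sq hv _
  have hσi : 0 < ⟪v i, σ⟫ := by
    have h : 0 < lam i * ⟪v i, σ⟫ := by
      rw [mul_inner_iterate_tensorPowerMap hv]
      exact (Nat.even_pow.mpr ⟨even_two, by omega⟩).pow_pos hi
    exact pos_of_mul_pos_right h (hlam i).le
  have hterm : ∀ l ∈ univ.erase i, ⟪v l, σ⟫ ^ 2 / ⟪v i, σ⟫ ^ 2 ≤
      lam i ^ 2 * (lam l ^ 2)⁻¹ * |lam j * ⟪v j, θ⟫ / (lam i * ⟪v i, θ⟫)| ^ 2 ^ (t + 2) := by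
    intro l hl
    have hli : |lam l * ⟪v l, θ⟫ / (lam i * ⟪v i, θ⟫)| ≤
        |lam j * ⟪v j, θ⟫ / (lam i * ⟪v i, θ⟫)| := by
      rw [abs_div, abs_div]
      exact div_le_div_of_nonneg_right (hj l (ne_of_mem_erase hl)) (abs_nonneg _)
    rw [sq_inner_iterate_tensorPowerMap hv θ (hlam l).ne',
      sq_inner_iterate_tensorPowerMap hv θ (hlam i).ne']
    calc _ = lam i ^ 2 * (lam l ^ 2)⁻¹ *
          |lam l * ⟪v l, θ⟫ / (lam i * ⟪v i, θ⟫)| ^ 2 ^ (t + 2) := by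
          rw [(Nat.even_pow.mpr ⟨even_two, by omega⟩).pow_abs, div_pow]
          have hl0 := (hlam l).ne'
          have hi0 := (hlam i).ne'
          field_simp
      _ ≤ _ := by gcongr
  calc ‖v i - NormedSpace.normalize σ‖ ^ 2
      ≤ 2 * ∑ l ∈ univ.erase i, ⟪v l, σ⟫ ^ 2 / ⟪v i, σ⟫ ^ 2 :=
        norm_sub_normalize_sq_le (hv.1 i) hσ hσi
    _ ≤ 2 * ∑ l ∈ univ.erase i,
          lam i ^ 2 * (lam l ^ 2)⁻¹ * |lam j * ⟪v j, θ⟫ / (lam i * ⟪v i, θ⟫)| ^ 2 ^ (t + 2) := by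
        gcongr with l hl
        exact hterm l hl
    _ = _ := by rw [← sum_mul, ← mul_sum]; ring

end Abstract

section Coordinates

variable {ι n : Type*} [Fintype n]

theorem real_inner_toLp_toLp (x y : n → ℝ) : ⟪toLp 2 x, toLp 2 y⟫ = ∑ i, x i * y i := by
  simp [EuclideanSpace.inner_toLp_toLp, dotProduct, mul_comm]

theorem orthonormal_toLp_iff [DecidableEq ι] {v : ι → n → ℝ} :
    Orthonormal ℝ (fun l => toLp 2 (v l)) ↔
      ∀ a b, ∑ i, v a i * v b i = if a = b then 1 else 0 := by
  simp [orthonormal_iff_ite, real_inner_toLp_toLp]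

theorem tensorPowerMap_toLp [Fintype ι] {v : ι → n → ℝ} {lam : ι → ℝ} {T : n → n → n → ℝ}
    (hT : ∀ i j k, T i j k = ∑ l, lam l * v l i * v l j * v l k) (θ : n → ℝ) :
    tensorPowerMap (fun l => toLp 2 (v l)) lam (toLp 2 θ) =
      toLp 2 fun i => ∑ j, ∑ k, T i j k * θ j * θ k := by
  ext i
  simp only [tensorPowerMap, real_inner_toLp_toLp, hT, WithLp.ofLp_sum, Finset.sum_apply,
    PiLp.smul_apply, smul_eq_mul, sum_mul]
  rw [sum_comm_cycle]
  refine sum_congr rfl fun l _ => ?_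
  simp only [sq, mul_sum, sum_mul]
  exact sum_congr rfl fun j _ => sum_congr rfl fun k _ => by ring

theorem normalize_toLp (x : n → ℝ) :
    NormedSpace.normalize (toLp 2 x) = toLp 2 fun i => x i / √(∑ j, x j ^ 2) := by
  ext i
  simp [NormedSpace.normalize, EuclideanSpace.norm_eq, div_eq_inv_mul]

end Coordinates

/-- Convergence of the tensor power method for an orthogonally decomposable
third-order tensor `T = ∑ λ_l v_l^{⊗3}` (`{v_l}` orthonormal, `λ_l > 0`).
Here `i1` plays the role of the index attaining the strictly largest value of
`|λ_l v_lᵀθ₀|` and `i2` the role of the index attaining the second largest. -/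
theorem tensor_power_method_convergence (d L : ℕ)
    (v : Fin L → Fin d → ℝ) (lam : Fin L → ℝ) (hlam : ∀ l, 0 < lam l)
    (horth : ∀ a b, (∑ i, v a i * v b i) = if a = b then (1 : ℝ) else 0)
    (T : Fin d → Fin d → Fin d → ℝ)
    (hT : ∀ i j k, T i j k = ∑ l, lam l * v l i * v l j * v l k)
    (θ0 : Fin d → ℝ) (i1 i2 : Fin L) (hne : i2 ≠ i1)
    (hmax : ∀ l, l ≠ i1 →
      |lam l * (∑ j, v l j * θ0 j)| < |lam i1 * (∑ j, v i1 j * θ0 j)|)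
    (hsecond : ∀ l, l ≠ i1 →
      |lam l * (∑ j, v l j * θ0 j)| ≤ |lam i2 * (∑ j, v i2 j * θ0 j)|)
    (θseq : ℕ → Fin d → ℝ) (h0 : θseq 0 = θ0)
    (hiter : ∀ t i, θseq (t + 1) i =
      (∑ j, ∑ k, T i j k * θseq t j * θseq t k) /
        Real.sqrt (∑ i', (∑ j, ∑ k, T i' j k * θseq t j * θseq t k) ^ 2)) :
    ∀ t : ℕ, 1 ≤ t →
      (∑ i, (v i1 i - θseq t i) ^ 2) ≤
        (2 * (lam i1) ^ 2 * ∑ l ∈ Finset.univ.erase i1, ((lam l) ^ 2)⁻¹) *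
          |lam i2 * (∑ j, v i2 j * θ0 j) / (lam i1 * (∑ j, v i1 j * θ0 j))|
            ^ (2 ^ (t + 1)) := by
  intro t ht
  obtain ⟨t, rfl⟩ := Nat.exists_eq_add_of_le' ht
  set u : Fin L → EuclideanSpace ℝ (Fin d) := fun l => toLp 2 (v l)
  have hu : Orthonormal ℝ u := orthonormal_toLp_iff.mpr horth
  have hstep : ∀ t, toLp 2 (θseq (t + 1)) =
      NormedSpace.normalize (tensorPowerMap u lam (toLp 2 (θseq t))) := fun t => by
    rw [tensorPowerMap_toLp hT, normalize_toLp]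
    exact congrArg (toLp 2) (funext (hiter t))
  have hθ := eq_normalize_iterate_succ (θ := fun t => toLp 2 (θseq t))
    normalize_tensorPowerMap_normalize hstep t
  rw [h0] at hθ
  have hc : ∀ l, ⟪u l, toLp 2 θ0⟫ = ∑ j, v l j * θ0 j := fun l => real_inner_toLp_toLp _ _
  have hi1 : lam i1 * ⟪u i1, toLp 2 θ0⟫ ≠ 0 := by
    rw [hc]
    exact abs_pos.mp ((abs_nonneg _).trans_lt (hmax i2 hne))
  have key := norm_sub_normalize_iterate_tensorPowerMap_sq_le hu hlam hi1
    (fun l hl => by simpa only [hc] using hsecond l hl) t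
  rw [← hθ, ← toLp_sub, EuclideanSpace.real_norm_sq_eq] at key
  simpa only [hc, Pi.sub_apply] using key
end

section
/- Whitening produces an orthogonal decomposition: suppose M₂ = ∑_{i=1}^L w_i μ_i μ_iᵀ with w_i > 0 and {μ_i} linearly independent in ℝ^d, and W ∈ ℝ^{d×L} satisfies WᵀM₂W = I_L. Then the vectors μ̃_i := √w_i · Wᵀμ_i, i = 1,…,L, form an orthonormal set in ℝ^L. -/
lemma conj_vecMulVec (d L : ℕ) (W : Matrix (Fin d) (Fin L) ℝ) (u : Fin d → ℝ) :
    W.transpose * Matrix.vecMulVec u u * W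
      = Matrix.vecMulVec (W.transpose.mulVec u) (W.transpose.mulVec u) := by
  ext k l
  simp only [Matrix.mul_apply, Matrix.vecMulVec_apply, Matrix.mulVec, dotProduct,
    Matrix.transpose_apply]
  rw [Finset.sum_mul_sum]
  rw [Finset.sum_comm]
  refine Finset.sum_congr rfl fun b _ => ?_
  rw [Finset.sum_mul]
  refine Finset.sum_congr rfl fun a _ => ?_
  ring

/-- Whitening produces an orthonormal set: if `M₂ = ∑ wᵢ μᵢ μᵢᵀ` with `wᵢ > 0`
and `{μᵢ}` linearly independent, and `WᵀM₂W = I_L`, then the vectors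
`μ̃ᵢ = √wᵢ · Wᵀμᵢ` are orthonormal in ℝ^L. -/
theorem whitening_orthonormal (d L : ℕ) (w : Fin L → ℝ) (hw : ∀ i, 0 < w i)
    (μ : Fin L → Fin d → ℝ) (hind : LinearIndependent ℝ μ)
    (M2 : Matrix (Fin d) (Fin d) ℝ)
    (hM2 : M2 = ∑ i, w i • Matrix.vecMulVec (μ i) (μ i))
    (W : Matrix (Fin d) (Fin L) ℝ)
    (hW : W.transpose * M2 * W = 1) :
    ∀ i j, (∑ k, (Real.sqrt (w i) * W.transpose.mulVec (μ i) k) *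
        (Real.sqrt (w j) * W.transpose.mulVec (μ j) k))
      = if i = j then (1 : ℝ) else 0 := by
  intro i j
  set B : Matrix (Fin L) (Fin L) ℝ :=
    Matrix.of fun k i => Real.sqrt (w i) * W.transpose.mulVec (μ i) k with hB
  have key : W.transpose * M2 * W
      = ∑ i, w i • Matrix.vecMulVec (W.transpose.mulVec (μ i)) (W.transpose.mulVec (μ i)) := by
    rw [hM2, Matrix.mul_sum, Matrix.sum_mul]
    refine Finset.sum_congr rfl fun x _ => ?_
    rw [Matrix.mul_smul, Matrix.smul_mul, conj_vecMulVec]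
  have hBBt : B * B.transpose = 1 := by
    rw [← hW, key]
    ext k l
    simp only [Matrix.mul_apply, hB, Matrix.of_apply, Matrix.transpose_apply,
      Matrix.sum_apply, Matrix.smul_apply, Matrix.vecMulVec_apply, smul_eq_mul]
    refine Finset.sum_congr rfl fun x _ => ?_
    rw [mul_mul_mul_comm, Real.mul_self_sqrt (hw x).le]
  have hBtB : B.transpose * B = 1 := mul_eq_one_comm.mp hBBt
  have h := congrFun (congrFun hBtB i) j
  simpa [Matrix.mul_apply, Matrix.one_apply, Matrix.transpose_apply, hB] using h
end

section
/- Likelihood decomposition (Lemma 1): given fixed class assignments Z with class counts n_a, and independent Bernoulli responses R_{i,j} with means P_{i,j}, define θ̂_{j,a} = ∑_i Z_{i,a}R_{i,j}/n_a, θ̄_{j,a} = ∑_i Z_{i,a}P_{i,j}/n_a, ℓ(R;Z) = ∑_{i,j}[R_{i,j}log θ̂_{j,z_i} + (1−R_{i,j})log(1−θ̂_{j,z_i})], and ℓ̄(Z) = ∑_{i,j}[P_{i,j}log θ̄_{j,z_i} + (1−P_{i,j})log(1−θ̄_{j,z_i})]. Then ℓ(R;Z) − ℓ̄(Z) = ∑_{a=1}^L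 n_a ∑_{j=1}^J D(θ̂_{j,a} ‖ θ̄_{j,a}) + ∑_i ∑_j (R_{i,j} − P_{i,j}) · log( θ̄_{j,z_i} / (1 − θ̄_{j,z_i}) ), provided all θ̂_{j,a}, θ̄_{j,a} ∈ (0,1). -/
/-- Binary Kullback-Leibler divergence. -/
noncomputable def klBin (p q : ℝ) : ℝ :=
  p * Real.log (p / q) + (1 - p) * Real.log ((1 - p) / (1 - q))

lemma klBin_alg (n s t p q : ℝ) (hp : p ∈ Set.Ioo (0:ℝ) 1) (hq : q ∈ Set.Ioo (0:ℝ) 1)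
    (hs : s = n * p) (ht : t = n * q) :
    s * Real.log p + (n - s) * Real.log (1 - p)
      - (t * Real.log q + (n - t) * Real.log (1 - q))
    = n * klBin p q + (s - t) * Real.log (q / (1 - q)) := by
  subst hs ht
  unfold klBin
  rw [Real.log_div hp.1.ne' hq.1.ne', Real.log_div (by linarith [hp.2]) (by linarith [hq.2]),
    Real.log_div hq.1.ne' (by linarith [hq.2])]
  ring

/-- Likelihood decomposition (Lemma 1): with class counts `n_a`, class sample
means `θ̂`, class mean probabilities `θ̄`, all lying in `(0,1)`,
`ℓ(R;Z) − ℓ̄(Z) = ∑_a n_a ∑_j D(θ̂_{j,a} ‖ θ̄_{j,a})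
  + ∑_{i,j} (R_{i,j} − P_{i,j}) log(θ̄_{j,z_i}/(1−θ̄_{j,z_i}))`. -/
theorem likelihood_decomposition (N J L : ℕ)
    (R P : Fin N → Fin J → ℝ)
    (hR : ∀ i j, R i j ∈ Set.Icc (0 : ℝ) 1)
    (hP : ∀ i j, P i j ∈ Set.Icc (0 : ℝ) 1)
    (Z : Fin N → Fin L)
    (hn : ∀ a : Fin L, 0 < (Finset.univ.filter (fun i => Z i = a)).card)
    (θhat θbar : Fin J → Fin L → ℝ)
    (hθhat : ∀ j a, θhat j a =
      (∑ i ∈ Finset.univ.filter (fun i => Z i = a), R i j) /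
        ((Finset.univ.filter (fun i => Z i = a)).card : ℝ))
    (hθbar : ∀ j a, θbar j a =
      (∑ i ∈ Finset.univ.filter (fun i => Z i = a), P i j) /
        ((Finset.univ.filter (fun i => Z i = a)).card : ℝ))
    (hhat01 : ∀ j a, θhat j a ∈ Set.Ioo (0 : ℝ) 1)
    (hbar01 : ∀ j a, θbar j a ∈ Set.Ioo (0 : ℝ) 1) :
    (∑ i, ∑ j, (R i j * Real.log (θhat j (Z i))
        + (1 - R i j) * Real.log (1 - θhat j (Z i))))
    - (∑ i, ∑ j, (P i j * Real.log (θbar j (Z i))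
        + (1 - P i j) * Real.log (1 - θbar j (Z i))))
    = (∑ a : Fin L, ((Finset.univ.filter (fun i => Z i = a)).card : ℝ) *
        ∑ j, klBin (θhat j a) (θbar j a))
      + ∑ i, ∑ j, (R i j - P i j) *
          Real.log (θbar j (Z i) / (1 - θbar j (Z i))) := by
  have fib : ∀ (g : Fin N → Fin L → ℝ), ∑ i, g i (Z i)
      = ∑ a, ∑ i ∈ Finset.univ.filter (fun i => Z i = a), g i a := by
    intro g
    rw [← Finset.sum_fiberwise Finset.univ Z (fun i => g i (Z i))]
    exact Finset.sum_congr rfl fun a _ => Finset.sum_congr rfl fun i hi => by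
      rw [(Finset.mem_filter.mp hi).2]
  rw [fib (fun i a => ∑ j, (R i j * Real.log (θhat j a) + (1 - R i j) * Real.log (1 - θhat j a))),
    fib (fun i a => ∑ j, (P i j * Real.log (θbar j a) + (1 - P i j) * Real.log (1 - θbar j a))),
    fib (fun i a => ∑ j, (R i j - P i j) * Real.log (θbar j a / (1 - θbar j a))),
    ← Finset.sum_sub_distrib, ← Finset.sum_add_distrib]
  refine Finset.sum_congr rfl fun a _ => ?_
  set F := Finset.univ.filter (fun i => Z i = a) with hF
  set n : ℝ := (F.card : ℝ) with hncard
  have hnpos : (0:ℝ) < n := by rw [hncard, hF]; exact_mod_cast hn a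
  rw [Finset.sum_comm, Finset.sum_comm (s := F), Finset.sum_comm (s := F),
    Finset.mul_sum, ← Finset.sum_sub_distrib, ← Finset.sum_add_distrib]
  refine Finset.sum_congr rfl fun j _ => ?_
  have hsum : ∀ (Q : Fin N → Fin J → ℝ) (c d : ℝ),
      ∑ i ∈ F, (Q i j * c + (1 - Q i j) * d)
        = (∑ i ∈ F, Q i j) * c + (n - ∑ i ∈ F, Q i j) * d := by
    intro Q c d
    rw [Finset.sum_add_distrib, ← Finset.sum_mul, ← Finset.sum_mul,
      Finset.sum_sub_distrib, Finset.sum_const, nsmul_eq_mul, mul_one]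
  have hsum2 : ∑ i ∈ F, (R i j - P i j) * Real.log (θbar j a / (1 - θbar j a))
      = ((∑ i ∈ F, R i j) - ∑ i ∈ F, P i j) * Real.log (θbar j a / (1 - θbar j a)) := by
    rw [← Finset.sum_mul, Finset.sum_sub_distrib]
  rw [hsum R, hsum P, hsum2]
  have hs : (∑ i ∈ F, R i j) = n * θhat j a := by
    rw [hθhat j a, ← hF, ← hncard]; field_simp
  have ht : (∑ i ∈ F, P i j) = n * θbar j a := by
    rw [hθbar j a, ← hF, ← hncard]; field_simp
  exact klBin_alg n _ _ _ _ (hhat01 j a) (hbar01 j a) hs ht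
end

section
/- The true assignment maximizes the expected profile likelihood (Step 4 inequality): with P_{i,j} = θ⁰_{j,z⁰_i} for true assignments Z⁰, and for any assignment Z with class averages θ̄^Z_{j,a} = ∑_i Z_{i,a}P_{i,j}/n_a ∈ (0,1), one has ℓ̄(Z⁰) − ℓ̄(Z) = ∑_{i=1}^N ∑_{j=1}^J D(P_{i,j} ‖ θ̄^Z_{j,z_i}) ≥ 0, where ℓ̄(Z) = ∑_{i,j}[P_{i,j} log θ̄^Z_{j,z_i} + (1−P_{i,j}) log(1−θ̄^Z_{j,z_i})]. -/
/-!
Since `P` is constant on the true classes, averaging it over the class of `z⁰ᵢ` returns `P i j`,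
so `ℓ̄(Z⁰) − ℓ̄(Z)` is, term by term, the entropy gap
`(p log p + (1-p) log(1-p)) − (p log q + (1-p) log(1-q)) = D(p ‖ q)`.
Nonnegativity follows from `D(p ‖ q) = q·φ(p/q) + (1-q)·φ((1-p)/(1-q))` with `φ = klFun ≥ 0`.
-/

open Finset Real InformationTheory

lemma Finset.sum_div_card_eq_of_forall_eq {ι K : Type*} [Semifield K] [CharZero K]
    {s : Finset ι} {f : ι → K} {a : K} (hs : s.Nonempty) (hf : ∀ m ∈ s, f m = a) :
    (∑ m ∈ s, f m) / #s = a := by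
  rw [sum_congr rfl hf, sum_const, nsmul_eq_mul,
    mul_div_cancel_left₀ _ (by simpa using hs.ne_empty)]

lemma klBin_eq_klFun {p q : ℝ} (hq₀ : q ≠ 0) (hq₁ : 1 - q ≠ 0) :
    klBin p q = q * klFun (p / q) + (1 - q) * klFun ((1 - p) / (1 - q)) := by
  unfold klBin klFun
  field_simp
  ring

lemma klBin_nonneg {p q : ℝ} (hp : p ∈ Set.Icc (0 : ℝ) 1) (hq : q ∈ Set.Ioo (0 : ℝ) 1) :
    0 ≤ klBin p q := by
  obtain ⟨hp₀, hp₁⟩ := hp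
  obtain ⟨hq₀, hq₁⟩ := hq
  rw [klBin_eq_klFun hq₀.ne' (sub_pos.2 hq₁).ne']
  have := klFun_nonneg (div_nonneg hp₀ hq₀.le)
  have := klFun_nonneg (div_nonneg (sub_nonneg.2 hp₁) (sub_pos.2 hq₁).le)
  positivity

lemma mul_log_div_eq_sub (p : ℝ) {q : ℝ} (hq : q ≠ 0) :
    p * log (p / q) = p * log p - p * log q := by
  rcases eq_or_ne p 0 with rfl | hp
  · simp
  · rw [log_div hp hq, mul_sub]

lemma klBin_eq_sub (p : ℝ) {q : ℝ} (hq₀ : q ≠ 0) (hq₁ : 1 - q ≠ 0) :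
    klBin p q = (p * log p + (1 - p) * log (1 - p)) - (p * log q + (1 - p) * log (1 - q)) := by
  rw [klBin, mul_log_div_eq_sub p hq₀, mul_log_div_eq_sub (1 - p) hq₁]
  ring

theorem true_assignment_maximizes_general (N J L : ℕ)
    (θ0 : Fin J → Fin L → ℝ) (Z0 Z : Fin N → Fin L)
    (P : Fin N → Fin J → ℝ)
    (hPdef : ∀ i j, P i j = θ0 j (Z0 i))
    (hP : ∀ i j, P i j ∈ Set.Ioo (0 : ℝ) 1)
    (θbar0 θbar : Fin J → Fin L → ℝ)
    (hθbar0 : ∀ j a, θbar0 j a =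
      (∑ i ∈ Finset.univ.filter (fun i => Z0 i = a), P i j) /
        ((Finset.univ.filter (fun i => Z0 i = a)).card : ℝ))
    (hbar01 : ∀ j a, θbar j a ∈ Set.Ioo (0 : ℝ) 1) :
    ((∑ i, ∑ j, (P i j * Real.log (θbar0 j (Z0 i))
        + (1 - P i j) * Real.log (1 - θbar0 j (Z0 i))))
      - (∑ i, ∑ j, (P i j * Real.log (θbar j (Z i))
        + (1 - P i j) * Real.log (1 - θbar j (Z i))))
      = ∑ i, ∑ j, klBin (P i j) (θbar j (Z i))) ∧
    0 ≤ (∑ i, ∑ j, (P i j * Real.log (θbar0 j (Z0 i))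
        + (1 - P i j) * Real.log (1 - θbar0 j (Z0 i))))
      - (∑ i, ∑ j, (P i j * Real.log (θbar j (Z i))
        + (1 - P i j) * Real.log (1 - θbar j (Z i)))) := by
  have hθbar0_eq : ∀ i j, θbar0 j (Z0 i) = P i j := fun i j => by
    rw [hθbar0]
    refine sum_div_card_eq_of_forall_eq ⟨i, by simp⟩ fun m hm => ?_
    rw [hPdef, hPdef, (mem_filter.1 hm).2]
  have hterm : ∀ i j, (P i j * log (θbar0 j (Z0 i)) + (1 - P i j) * log (1 - θbar0 j (Z0 i)))
      - (P i j * log (θbar j (Z i)) + (1 - P i j) * log (1 - θbar j (Z i)))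
      = klBin (P i j) (θbar j (Z i)) := fun i j => by
    obtain ⟨hq₀, hq₁⟩ := hbar01 j (Z i)
    rw [hθbar0_eq, klBin_eq_sub _ hq₀.ne' (sub_pos.2 hq₁).ne']
  simp only [← sum_sub_distrib, hterm, true_and]
  exact sum_nonneg fun i _ => sum_nonneg fun j _ =>
    klBin_nonneg (Set.Ioo_subset_Icc_self (hP i j)) (hbar01 j (Z i))

/-- The true assignment maximizes the expected profile likelihood: with
`P_{i,j} = θ⁰_{j,z⁰_i}` and class averages `θ̄^Z` of any assignment `Z`,
`ℓ̄(Z⁰) − ℓ̄(Z) = ∑_{i,j} D(P_{i,j} ‖ θ̄^Z_{j,z_i}) ≥ 0`. -/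
theorem true_assignment_maximizes (N J L : ℕ)
    (θ0 : Fin J → Fin L → ℝ) (Z0 Z : Fin N → Fin L)
    (P : Fin N → Fin J → ℝ)
    (hPdef : ∀ i j, P i j = θ0 j (Z0 i))
    (hP : ∀ i j, P i j ∈ Set.Ioo (0 : ℝ) 1)
    (hn0 : ∀ a : Fin L, 0 < (Finset.univ.filter (fun i => Z0 i = a)).card)
    (hn : ∀ a : Fin L, 0 < (Finset.univ.filter (fun i => Z i = a)).card)
    (θbar0 θbar : Fin J → Fin L → ℝ)
    (hθbar0 : ∀ j a, θbar0 j a =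
      (∑ i ∈ Finset.univ.filter (fun i => Z0 i = a), P i j) /
        ((Finset.univ.filter (fun i => Z0 i = a)).card : ℝ))
    (hθbar : ∀ j a, θbar j a =
      (∑ i ∈ Finset.univ.filter (fun i => Z i = a), P i j) /
        ((Finset.univ.filter (fun i => Z i = a)).card : ℝ))
    (hbar01 : ∀ j a, θbar j a ∈ Set.Ioo (0 : ℝ) 1) :
    ((∑ i, ∑ j, (P i j * Real.log (θbar0 j (Z0 i))
        + (1 - P i j) * Real.log (1 - θbar0 j (Z0 i))))
      - (∑ i, ∑ j, (P i j * Real.log (θbar j (Z i))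
        + (1 - P i j) * Real.log (1 - θbar j (Z i))))
      = ∑ i, ∑ j, klBin (P i j) (θbar j (Z i))) ∧
    0 ≤ (∑ i, ∑ j, (P i j * Real.log (θbar0 j (Z0 i))
        + (1 - P i j) * Real.log (1 - θbar0 j (Z0 i))))
      - (∑ i, ∑ j, (P i j * Real.log (θbar j (Z i))
        + (1 - P i j) * Real.log (1 - θbar j (Z i)))) :=
  true_assignment_maximizes_general N J L θ0 Z0 Z P hPdef hP θbar0 θbar hθbar0 hbar01
end

section
/- Refinement increases the expected likelihood (Lemma 2): let Π be a partition of [N] into nonempty sets and Π* a refinement of Π. Given numbers P_{i,j} ∈ (0,1), define for any partition the cell means θ̄^Π_{j,S} = (1/|S|)∑_{i∈S} P_{i,j} and ℓ̄(Π) = ∑_{i=1}^N ∑_{j=1}^J [P_{i,j} log θ̄^Π_{j,S(i)} + (1−P_{i,j}) log(1−θ̄^Π_{j,S(i)})], where S(i) is the cell containing i. Then ℓ̄(Π*) ≥ ℓ̄(Π). -/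
open Finset

/-- Expected profile log-likelihood of the partition of `Fin N` induced by the
fibers of `f`: each subject `i` is assigned the cell mean of its cell. -/
noncomputable def ellbar {N J : ℕ} {α : Type*} [DecidableEq α]
    (P : Fin N → Fin J → ℝ) (f : Fin N → α) : ℝ :=
  ∑ i, ∑ j,
    (P i j * Real.log
        ((∑ i' ∈ univ.filter (fun i'' => f i'' = f i), P i' j) /
          ((univ.filter (fun i'' => f i'' = f i)).card : ℝ))
      + (1 - P i j) * Real.log
        (1 - (∑ i' ∈ univ.filter (fun i'' => f i'' = f i), P i' j) /
          ((univ.filter (fun i'' => f i'' = f i)).card : ℝ)))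

lemma gibbs (p q : ℝ) (hp0 : 0 < p) (hp1 : p < 1) (hq0 : 0 < q) (hq1 : q < 1) :
    p * Real.log q + (1 - p) * Real.log (1 - q) ≤
      p * Real.log p + (1 - p) * Real.log (1 - p) := by
  have h1 : Real.log q - Real.log p ≤ q / p - 1 := by
    have := Real.log_le_sub_one_of_pos (show 0 < q / p by positivity)
    rwa [Real.log_div hq0.ne' hp0.ne'] at this
  have h2 : Real.log (1 - q) - Real.log (1 - p) ≤ (1 - q) / (1 - p) - 1 := by
    have := Real.log_le_sub_one_of_pos (show 0 < (1 - q) / (1 - p) by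
      apply div_pos <;> linarith)
    rwa [Real.log_div (by linarith) (by linarith)] at this
  have e1 : p * (q / p - 1) = q - p := by field_simp
  have e2 : (1 - p) * ((1 - q) / (1 - p) - 1) = (1 - q) - (1 - p) := by
    have hne : (1 : ℝ) - p ≠ 0 := by linarith
    field_simp
  have t1 := mul_le_mul_of_nonneg_left h1 hp0.le
  have t2 := mul_le_mul_of_nonneg_left h2 (by linarith : (0:ℝ) ≤ 1 - p)
  rw [e1] at t1
  rw [e2] at t2
  nlinarith [t1, t2]

lemma gibbs_scaled (S n q : ℝ) (hn : 0 < n) (hS0 : 0 < S) (hSn : S < n)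
    (hq0 : 0 < q) (hq1 : q < 1) :
    S * Real.log q + (n - S) * Real.log (1 - q) ≤
      S * Real.log (S / n) + (n - S) * Real.log (1 - S / n) := by
  have hp0 : 0 < S / n := div_pos hS0 hn
  have hp1 : S / n < 1 := (div_lt_one hn).2 hSn
  have h := gibbs (S / n) q hp0 hp1 hq0 hq1
  have h' := mul_le_mul_of_nonneg_left h hn.le
  have e : ∀ x y : ℝ, n * (S / n * x + (1 - S / n) * y) = S * x + (n - S) * y := by
    intro x y; field_simp
  rw [e, e] at h'
  exact h'

lemma sum_bounds {N : ℕ} (T : Finset (Fin N)) (hT : T.Nonempty) (p : Fin N → ℝ)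
    (hp : ∀ i, p i ∈ Set.Ioo (0:ℝ) 1) :
    0 < ∑ i ∈ T, p i ∧ ∑ i ∈ T, p i < (T.card : ℝ) := by
  constructor
  · exact Finset.sum_pos (fun i _ => (hp i).1) hT
  · calc ∑ i ∈ T, p i < ∑ i ∈ T, 1 :=
          Finset.sum_lt_sum_of_nonempty hT (fun i _ => (hp i).2)
    _ = (T.card : ℝ) := by simp

/-- Refinement increases the expected likelihood (Lemma 2): if the partition
induced by `g` refines the partition induced by `f`, then `ℓ̄(f) ≤ ℓ̄(g)`. -/
theorem refinement_increases_ellbar {N J : ℕ} {α β : Type*}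
    [DecidableEq α] [DecidableEq β]
    (P : Fin N → Fin J → ℝ) (hP : ∀ i j, P i j ∈ Set.Ioo (0 : ℝ) 1)
    (f : Fin N → α) (g : Fin N → β)
    (href : ∀ i i', g i = g i' → f i = f i') :
    ellbar P f ≤ ellbar P g := by
  unfold ellbar
  rw [Finset.sum_comm (γ := Fin N) (α := Fin J)]
  conv_rhs => rw [Finset.sum_comm (γ := Fin N) (α := Fin J)]
  apply Finset.sum_le_sum
  intro j _
  have hmaps : ∀ x ∈ (univ : Finset (Fin N)), g x ∈ univ.image g :=
    fun x hx => Finset.mem_image_of_mem g hx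
  rw [← Finset.sum_fiberwise_of_maps_to hmaps, ← Finset.sum_fiberwise_of_maps_to hmaps]
  apply Finset.sum_le_sum
  intro b hb
  obtain ⟨i₀, -, hi₀⟩ := Finset.mem_image.1 hb
  set T : Finset (Fin N) := univ.filter (fun i => g i = b) with hTdef
  have hi₀T : i₀ ∈ T := by simp [hTdef, hi₀]
  have hTne : T.Nonempty := ⟨i₀, hi₀T⟩
  set Ff : Finset (Fin N) := univ.filter (fun i'' => f i'' = f i₀) with hFfdef
  have hFfne : Ff.Nonempty := ⟨i₀, by simp [hFfdef]⟩
  set Sf : ℝ := ∑ i' ∈ Ff, P i' j with hSfdef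
  set qf : ℝ := Sf / (Ff.card : ℝ) with hqfdef
  set S : ℝ := ∑ i ∈ T, P i j with hSdef
  set n : ℝ := (T.card : ℝ) with hndef
  -- bounds
  obtain ⟨hSf0, hSfn⟩ := sum_bounds Ff hFfne (fun i' => P i' j) (fun i' => hP i' j)
  obtain ⟨hS0, hSn⟩ := sum_bounds T hTne (fun i' => P i' j) (fun i' => hP i' j)
  have hncard : (0:ℝ) < n := by
    rw [hndef]; exact_mod_cast Finset.card_pos.2 hTne
  have hqf0 : 0 < qf := div_pos hSf0 (by exact_mod_cast Finset.card_pos.2 hFfne)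
  have hqf1 : qf < 1 := by
    rw [hqfdef, div_lt_one (by exact_mod_cast Finset.card_pos.2 hFfne)]
    exact hSfn
  -- rewrite the f-side sum
  have hfib_f : ∀ i ∈ T, univ.filter (fun i'' => f i'' = f i) = Ff := by
    intro i hi
    have hgi : g i = b := by simpa [hTdef] using hi
    have hfi : f i = f i₀ := href i i₀ (by rw [hgi, hi₀])
    simp only [hFfdef, hfi]
  have hfib_g : ∀ i ∈ T, univ.filter (fun i'' => g i'' = g i) = T := by
    intro i hi
    have hgi : g i = b := by simpa [hTdef] using hi
    simp only [hTdef, hgi]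
  have hLHS : ∑ i ∈ T, (P i j * Real.log
        ((∑ i' ∈ univ.filter (fun i'' => f i'' = f i), P i' j) /
          ((univ.filter (fun i'' => f i'' = f i)).card : ℝ))
      + (1 - P i j) * Real.log
        (1 - (∑ i' ∈ univ.filter (fun i'' => f i'' = f i), P i' j) /
          ((univ.filter (fun i'' => f i'' = f i)).card : ℝ)))
      = S * Real.log qf + (n - S) * Real.log (1 - qf) := by
    rw [Finset.sum_congr rfl (fun i hi => by rw [hfib_f i hi])]
    rw [Finset.sum_add_distrib, ← Finset.sum_mul, ← Finset.sum_mul,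
      Finset.sum_sub_distrib, Finset.sum_const, nsmul_eq_mul, mul_one]
  have hRHS : ∑ i ∈ T, (P i j * Real.log
        ((∑ i' ∈ univ.filter (fun i'' => g i'' = g i), P i' j) /
          ((univ.filter (fun i'' => g i'' = g i)).card : ℝ))
      + (1 - P i j) * Real.log
        (1 - (∑ i' ∈ univ.filter (fun i'' => g i'' = g i), P i' j) /
          ((univ.filter (fun i'' => g i'' = g i)).card : ℝ)))
      = S * Real.log (S / n) + (n - S) * Real.log (1 - S / n) := by
    rw [Finset.sum_congr rfl (fun i hi => by rw [hfib_g i hi])]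
    rw [Finset.sum_add_distrib, ← Finset.sum_mul, ← Finset.sum_mul,
      Finset.sum_sub_distrib, Finset.sum_const, nsmul_eq_mul, mul_one]
  rw [hLHS, hRHS]
  exact gibbs_scaled S n qf hncard hS0 hSn hqf0 hqf1
end
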